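/- For a tripartite pure state |ψ⟩ on H_R ⊗ H_A ⊗ H_B with reduced state ψ^R = 𝟙/D maximally mixed, if the majorization (𝟙_K/K) ⊗ ψ^B ≺ (𝟙_L/L) ⊗ ψ^{AB} holds between the indicated positive semidefinite operators, then log₂K − log₂L ≥ log₂(λ₀^B · D), where λ₀^B is the largest eigenvalue of ψ^B. -/

import Mathlib

open Matrix Kronecker Finset
open scoped ComplexConjugate Classical ComplexOrder

noncomputable section

/-- Density matrix (outer product) of a vector. -/
def dmv {n : Type*} (v : n → ℂ) : Matrix n n ℂ :=
  Matrix.of fun i j => v i * conj (v j)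

/-- Outer product `|u⟩⟨v|`. -/
def outer {n : Type*} (u v : n → ℂ) : Matrix n n ℂ :=
  Matrix.of fun i j => u i * conj (v j)

/-- Largest eigenvalue of a (Hermitian) matrix. -/
def maxEig {n : Type*} [Fintype n] [DecidableEq n] (A : Matrix n n ℂ) : ℝ :=
  if h : A.IsHermitian then ⨆ i, h.eigenvalues i else 0

/-- Sum of the `k` largest eigenvalues of a Hermitian matrix. -/
def topSum {n : Type*} [Fintype n] [DecidableEq n] (A : Matrix n n ℂ) (k : ℕ) : ℝ :=
  if h : A.IsHermitian then
    sSup {x : ℝ | ∃ s : Finset n, s.card = k ∧ x = ∑ i ∈ s, h.eigenvalues i}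
  else 0

/-- Majorization of Hermitian operators: `A ≺ B` (possibly on different spaces):
every partial sum of the `k` largest eigenvalues of `A` is at most that of `B`,
and the traces agree. -/
def Maj {m n : Type*} [Fintype m] [DecidableEq m] [Fintype n] [DecidableEq n]
    (A : Matrix m m ℂ) (B : Matrix n n ℂ) : Prop :=
  (∀ k : ℕ, topSum A k ≤ topSum B k) ∧ A.trace = B.trace

/-- Total matrix square root: the positive square root for PSD matrices, `0` otherwise. -/
def msqrt {n : Type*} [Fintype n] [DecidableEq n] (A : Matrix n n ℂ) : Matrix n n ℂ :=
  if h : A.PosSemidef then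
    (h.1.eigenvectorUnitary : Matrix n n ℂ) *
      diagonal ((↑) ∘ (√·) ∘ h.1.eigenvalues) * (star h.1.eigenvectorUnitary : Matrix n n ℂ)
  else 0

/-- Trace norm (sum of singular values). -/
def traceNorm {n : Type*} [Fintype n] [DecidableEq n] (A : Matrix n n ℂ) : ℝ :=
  ((msqrt (Aᴴ * A)).trace).re

/-- Fidelity `F(ρ,σ) = ‖√ρ √σ‖₁`. -/
def fid {n : Type*} [Fintype n] [DecidableEq n] (ρ σ : Matrix n n ℂ) : ℝ :=
  traceNorm (msqrt ρ * msqrt σ)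

/-- Purified distance `P(ρ,σ) = √(1 − F²(ρ,σ))`. -/
def pd {n : Type*} [Fintype n] [DecidableEq n] (ρ σ : Matrix n n ℂ) : ℝ :=
  Real.sqrt (1 - fid ρ σ ^ 2)

/-- Choi matrix of a map on matrices. -/
def choi {m n : Type*} [Fintype m] [DecidableEq m]
    (N : Matrix m m ℂ → Matrix n n ℂ) : Matrix (m × n) (m × n) ℂ :=
  Matrix.of fun p q => N (Matrix.single p.1 q.1 1) p.2 q.2

/-- A map is mixed-unitary if it is a convex combination of unitary conjugations. -/
def IsMixedUnitary {n : Type*} [Fintype n] [DecidableEq n]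
    (N : Matrix n n ℂ → Matrix n n ℂ) : Prop :=
  ∃ (m : ℕ) (p : Fin m → ℝ) (U : Fin m → Matrix n n ℂ),
    (∀ i, 0 ≤ p i) ∧ (∑ i, p i = 1) ∧ (∀ i, U i ∈ Matrix.unitaryGroup n ℂ) ∧
    ∀ ρ, N ρ = ∑ i, (p i : ℂ) • (U i * ρ * (U i)ᴴ)

/-- `id_R ⊗ M` acting blockwise on a matrix on `R × S`. -/
def idTensor {R S T : Type*} (M : Matrix S S ℂ →ₗ[ℂ] Matrix T T ℂ)
    (ρ : Matrix (R × S) (R × S) ℂ) : Matrix (R × T) (R × T) ℂ :=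
  Matrix.of fun p q => M (Matrix.of fun s s' => ρ (p.1, s) (q.1, s')) p.2 q.2

end

/-!
Compare the largest eigenvalues of the two sides. Tensoring with `𝟙_K/K` scales the spectrum
of `ψ^B`, so the left side has `λ₀^B/K` as an eigenvalue. Writing `ψ` as an `R × AB` matrix `Ψ`,
we have `ψ^R = Ψ Ψᴴ = 𝟙/D` and `ψ^{AB} = Ψᵀ Ψᵀᴴ`, whence `(ψ^{AB})² = ψ^{AB}/D`: every eigenvalue
of `ψ^{AB}` is `0` or `1/D`, and every eigenvalue of the right side is at most `1/(DL)`. The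
first partial sum of the majorization gives `λ₀^B/K ≤ 1/(DL)`, and `λ₀^B > 0` because
`tr ψ^B = 1`.
-/

lemma kronecker_mulVec_prod {R l m n p : Type*} [CommSemiring R] [Fintype m] [Fintype p]
    (X : Matrix l m R) (Y : Matrix n p R) (x : m → R) (y : p → R) :
    (X ⊗ₖ Y) *ᵥ (fun q => x q.1 * y q.2) = fun q => (X *ᵥ x) q.1 * (Y *ᵥ y) q.2 := by
  ext q
  simp only [mulVec, dotProduct, kroneckerMap_apply, Fintype.sum_prod_type, Finset.sum_mul,
    Finset.mul_sum]
  exact Finset.sum_comm.trans <|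
    Finset.sum_congr rfl fun _ _ => Finset.sum_congr rfl fun _ _ => by ring

lemma smul_one_kronecker_mul_self {R m n : Type*} [CommSemiring R] [Fintype m] [DecidableEq m]
    [Fintype n] {a c : R} {N : Matrix n n R} (h : N * N = c • N) :
    ((a • 1 : Matrix m m R) ⊗ₖ N) * ((a • 1 : Matrix m m R) ⊗ₖ N) =
      (a * c) • ((a • 1 : Matrix m m R) ⊗ₖ N) := by
  rw [← mul_kronecker_mul, h, smul_mul_smul, Matrix.one_mul]
  simp only [smul_kronecker, kronecker_smul, smul_smul]
  ring_nf

lemma mul_conjTranspose_mul_self_eq_smul {R m n : Type*} [CommSemiring R] [StarRing R]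
    [Fintype m] [Fintype n] [DecidableEq n] {X : Matrix m n R} {c : R} (h : Xᴴ * X = c • 1) :
    X * Xᴴ * (X * Xᴴ) = c • (X * Xᴴ) := by
  rw [Matrix.mul_assoc, ← Matrix.mul_assoc Xᴴ, h, Matrix.smul_mul, Matrix.one_mul,
    Matrix.mul_smul]

lemma Matrix.IsHermitian.smul_one_kronecker {m n : Type*} [DecidableEq m] {A : Matrix n n ℂ}
    (hA : A.IsHermitian) (c : ℝ) :
    (((c : ℂ) • 1 : Matrix m m ℂ) ⊗ₖ A).IsHermitian := by
  rw [IsHermitian, conjTranspose_kronecker, hA.eq, conjTranspose_smul, conjTranspose_one,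
    Complex.star_def, Complex.conj_ofReal]

namespace Matrix.IsHermitian

variable {n : Type*} [Fintype n] [DecidableEq n] {A : Matrix n n ℂ}

lemma maxEig_eq_iSup (hA : A.IsHermitian) : maxEig A = ⨆ i, hA.eigenvalues i := dif_pos hA

lemma eigenvalues_le_maxEig (hA : A.IsHermitian) (i : n) : hA.eigenvalues i ≤ maxEig A := by
  rw [hA.maxEig_eq_iSup]
  exact le_ciSup (Set.finite_range _).bddAbove i

lemma exists_eigenvalues_eq_maxEig [Nonempty n] (hA : A.IsHermitian) :
    ∃ i, hA.eigenvalues i = maxEig A := by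
  obtain ⟨i, hi⟩ := Finite.exists_max hA.eigenvalues
  exact ⟨i, le_antisymm (hA.eigenvalues_le_maxEig i) (hA.maxEig_eq_iSup ▸ ciSup_le hi)⟩

lemma topSum_one_eq_maxEig (hA : A.IsHermitian) : topSum A 1 = maxEig A := by
  rw [topSum, dif_pos hA, hA.maxEig_eq_iSup, iSup]
  congr 1
  ext x
  simp [Finset.card_eq_one, eq_comm]

lemma maxEig_pos_of_trace_re_pos (hA : A.IsHermitian) (h : 0 < A.trace.re) : 0 < maxEig A := by
  rw [hA.trace_eq_sum_eigenvalues, Complex.re_sum] at h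
  obtain ⟨i, -, hi⟩ := Finset.exists_lt_of_sum_lt (s := Finset.univ) (f := fun _ => (0 : ℝ))
    (by simpa using h)
  exact hi.trans_le (hA.eigenvalues_le_maxEig i)

lemma mem_range_eigenvalues_of_mulVec_eq (hA : A.IsHermitian) {v : n → ℂ} {μ : ℝ} (hv : v ≠ 0)
    (h : A *ᵥ v = (μ : ℂ) • v) : μ ∈ Set.range hA.eigenvalues := by
  have : Module.End.HasEigenvalue (toLin' A) (μ : ℂ) :=
    Module.End.hasEigenvalue_of_hasEigenvector
      ⟨by rwa [Module.End.mem_eigenspace_iff, toLin'_apply], hv⟩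
  rw [← hA.spectrum_real_eq_range_eigenvalues, ← spectrum.algebraMap_mem_iff ℂ,
    ← spectrum_toLin']
  exact this.mem_spectrum

lemma eigenvalues_eq_zero_or_eq_of_mul_self_eq_smul (hA : A.IsHermitian) {c : ℝ}
    (h : A * A = (c : ℂ) • A) (i : n) : hA.eigenvalues i = 0 ∨ hA.eigenvalues i = c := by
  set v : n → ℂ := ⇑(hA.eigenvectorBasis i)
  have hv : v ≠ 0 := (WithLp.ofLp_eq_zero 2).ne.2 <| hA.eigenvectorBasis.orthonormal.ne_zero i
  have hAv := hA.mulVec_eigenvectorBasis i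
  have hsq : (hA.eigenvalues i * hA.eigenvalues i) • v = (c * hA.eigenvalues i) • v :=
    calc (hA.eigenvalues i * hA.eigenvalues i) • v = (A * A) *ᵥ v := by
          rw [← mulVec_mulVec, hAv, mulVec_smul, hAv, smul_smul]
      _ = (c * hA.eigenvalues i) • v := by
          rw [h, smul_mulVec, hAv, Complex.coe_smul, smul_smul]
  exact (mul_eq_mul_right_iff.mp (smul_left_injective ℝ hv hsq)).symm

lemma maxEig_le_of_mul_self_eq_smul (hA : A.IsHermitian) {c : ℝ} (hc : 0 ≤ c)
    (h : A * A = (c : ℂ) • A) : maxEig A ≤ c := by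
  rw [hA.maxEig_eq_iSup]
  refine Real.iSup_le (fun i => ?_) hc
  rcases hA.eigenvalues_eq_zero_or_eq_of_mul_self_eq_smul h i with h' | h' <;> simp [h', hc]

lemma mul_maxEig_le_maxEig_smul_one_kronecker {m : Type*} [Fintype m] [DecidableEq m]
    [Nonempty m] [Nonempty n] (hA : A.IsHermitian) (c : ℝ) :
    c * maxEig A ≤ maxEig (((c : ℂ) • 1 : Matrix m m ℂ) ⊗ₖ A) := by
  obtain ⟨i, hi⟩ := hA.exists_eigenvalues_eq_maxEig
  let j := Classical.arbitrary m
  set v : n → ℂ := ⇑(hA.eigenvectorBasis i)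
  obtain ⟨b, hb⟩ := Function.ne_iff.mp <|
    (WithLp.ofLp_eq_zero 2).ne.2 <| hA.eigenvectorBasis.orthonormal.ne_zero i
  have hB := hA.smul_one_kronecker (m := m) c
  obtain ⟨k, hk⟩ := hB.mem_range_eigenvalues_of_mulVec_eq
    (v := fun q => (Pi.single j 1 : m → ℂ) q.1 * v q.2) (μ := c * maxEig A)
    (Function.ne_iff.mpr ⟨(j, b), by simpa [v] using hb⟩) (by
      rw [kronecker_mulVec_prod, smul_mulVec, one_mulVec, hA.mulVec_eigenvectorBasis, hi]
      ext q
      simp only [Pi.smul_apply, smul_eq_mul, Complex.real_smul]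
      push_cast
      ring)
  exact hk ▸ hB.eigenvalues_le_maxEig k

end Matrix.IsHermitian

section PureState

variable {R A B : Type*} (ψ : R × A × B → ℂ)

lemma reducedR_eq_mul_conjTranspose [Fintype A] [Fintype B] :
    (of fun r r' : R => ∑ a, ∑ b, ψ (r, a, b) * conj (ψ (r', a, b))) =
      (of fun r (p : A × B) => ψ (r, p.1, p.2)) * (of fun r (p : A × B) => ψ (r, p.1, p.2))ᴴ := by
  ext r r'
  simp [mul_apply, Fintype.sum_prod_type]

lemma reducedAB_eq_mul_conjTranspose [Fintype R] :
    (of fun p q : A × B => ∑ r, ψ (r, p.1, p.2) * conj (ψ (r, q.1, q.2))) =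
      (of fun r (p : A × B) => ψ (r, p.1, p.2))ᵀ *
        (of fun r (p : A × B) => ψ (r, p.1, p.2))ᵀᴴ := by
  ext p q
  simp [mul_apply]

lemma reducedB_eq_mul_conjTranspose [Fintype R] [Fintype A] :
    (of fun b b' : B => ∑ r, ∑ a, ψ (r, a, b) * conj (ψ (r, a, b'))) =
      (of fun b (p : R × A) => ψ (p.1, p.2, b)) * (of fun b (p : R × A) => ψ (p.1, p.2, b))ᴴ := by
  ext b b'
  simp [mul_apply, Fintype.sum_prod_type]

lemma trace_reducedB [Fintype R] [Fintype A] [Fintype B] (hψ : ∑ x, ‖ψ x‖ ^ 2 = 1) :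
    (of fun b b' : B => ∑ r, ∑ a, ψ (r, a, b) * conj (ψ (r, a, b'))).trace = 1 := by
  have : ∑ x, ((‖ψ x‖ ^ 2 : ℝ) : ℂ) = 1 := by exact_mod_cast hψ
  rw [← this, Fintype.sum_prod_type]
  simp only [trace, Matrix.diag, of_apply, Complex.mul_conj', Fintype.sum_prod_type]
  push_cast
  rw [Finset.sum_comm]
  exact Finset.sum_congr rfl fun _ _ => Finset.sum_comm

end PureState

lemma logb_mul_le_logb_sub_logb {k l d x : ℝ} (hk : 0 < k) (hl : 0 ≤ l) (hd : 0 ≤ d)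
    (hx : 0 < x) (h : k⁻¹ * x ≤ l⁻¹ * d⁻¹) :
    Real.logb 2 (x * d) ≤ Real.logb 2 k - Real.logb 2 l := by
  have hld : 0 < l⁻¹ * d⁻¹ := (by positivity : 0 < k⁻¹ * x).trans_le h
  obtain rfl | hl' := hl.eq_or_lt
  · simp at hld
  obtain rfl | hd' := hd.eq_or_lt
  · simp at hld
  rw [← Real.logb_div hk.ne' hl'.ne']
  refine Real.logb_le_logb_of_le (by norm_num) (by positivity) ?_
  rw [le_div_iff₀ hl']
  rw [inv_mul_le_iff₀ hk, ← mul_inv, ← div_eq_mul_inv, le_div_iff₀ (by positivity)] at h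
  linarith

theorem stmt0_general {Rt At Bt : Type*} [Fintype Rt] [Fintype At] [Fintype Bt]
    [DecidableEq Rt] [DecidableEq At] [DecidableEq Bt] [Nonempty Bt]
    (ψ : Rt × At × Bt → ℂ)
    (hunit : ∑ x, ‖ψ x‖ ^ 2 = 1)
    (D : ℕ)
    (hmix : (Matrix.of fun r r' : Rt => ∑ a, ∑ b, ψ (r, a, b) * conj (ψ (r', a, b)))
      = (D : ℂ)⁻¹ • (1 : Matrix Rt Rt ℂ))
    (K L : ℕ) (hK : 0 < K)
    (hmaj : Maj
      ((((K : ℂ)⁻¹ • (1 : Matrix (Fin K) (Fin K) ℂ))) ⊗ₖ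
        (Matrix.of fun b b' : Bt => ∑ r, ∑ a, ψ (r, a, b) * conj (ψ (r, a, b'))))
      ((((L : ℂ)⁻¹ • (1 : Matrix (Fin L) (Fin L) ℂ))) ⊗ₖ
        (Matrix.of fun p q : At × Bt => ∑ r, ψ (r, p.1, p.2) * conj (ψ (r, q.1, q.2))))) :
    Real.logb 2 K - Real.logb 2 L ≥
      Real.logb 2
        (maxEig (Matrix.of fun b b' : Bt => ∑ r, ∑ a, ψ (r, a, b) * conj (ψ (r, a, b'))) * D) := by
  have hM := reducedB_eq_mul_conjTranspose ψ ▸ isHermitian_mul_conjTranspose_self _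
  have hN := reducedAB_eq_mul_conjTranspose ψ ▸ isHermitian_mul_conjTranspose_self _
  have hNN : _ * _ = ((D : ℝ)⁻¹ : ℂ) • _ := reducedAB_eq_mul_conjTranspose ψ ▸
    mul_conjTranspose_mul_self_eq_smul (by
      rw [conjTranspose_transpose_eq_transpose_conjTranspose, ← transpose_mul,
        ← reducedR_eq_mul_conjTranspose, hmix, transpose_smul, transpose_one]
      push_cast; rfl)
  have : Nonempty (Fin K) := ⟨⟨0, hK⟩⟩
  have hA := hM.smul_one_kronecker (m := Fin K) (K : ℝ)⁻¹
  have hB := hN.smul_one_kronecker (m := Fin L) (L : ℝ)⁻¹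
  have hlower := hM.mul_maxEig_le_maxEig_smul_one_kronecker (m := Fin K) (K : ℝ)⁻¹
  have hupper := hB.maxEig_le_of_mul_self_eq_smul (c := (L : ℝ)⁻¹ * (D : ℝ)⁻¹) (by positivity)
    (by rw [smul_one_kronecker_mul_self hNN]; push_cast; rfl)
  push_cast at hA hB hlower hupper
  have hmaj₁ := hmaj.1 1
  rw [hA.topSum_one_eq_maxEig, hB.topSum_one_eq_maxEig] at hmaj₁
  have hpos := hM.maxEig_pos_of_trace_re_pos (by rw [trace_reducedB ψ hunit]; norm_num)
  exact logb_mul_le_logb_sub_logb (by positivity) (by positivity) (by positivity) hpos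
    (hlower.trans (hmaj₁.trans hupper))

/-- converse bound from majorization for a tripartite pure state with
maximally mixed reduced state on `R`. -/
theorem stmt0 {Rt At Bt : Type*} [Fintype Rt] [Fintype At] [Fintype Bt]
    [DecidableEq Rt] [DecidableEq At] [DecidableEq Bt] [Nonempty Bt]
    (ψ : Rt × At × Bt → ℂ)
    (hunit : ∑ x, ‖ψ x‖ ^ 2 = 1)
    (D : ℕ) (hD : D = Fintype.card Rt) (hDpos : 0 < D)
    (hmix : (Matrix.of fun r r' : Rt => ∑ a, ∑ b, ψ (r, a, b) * conj (ψ (r', a, b)))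
      = (D : ℂ)⁻¹ • (1 : Matrix Rt Rt ℂ))
    (K L : ℕ) (hK : 0 < K) (hL : 0 < L)
    (hmaj : Maj
      ((((K : ℂ)⁻¹ • (1 : Matrix (Fin K) (Fin K) ℂ))) ⊗ₖ
        (Matrix.of fun b b' : Bt => ∑ r, ∑ a, ψ (r, a, b) * conj (ψ (r, a, b'))))
      ((((L : ℂ)⁻¹ • (1 : Matrix (Fin L) (Fin L) ℂ))) ⊗ₖ
        (Matrix.of fun p q : At × Bt => ∑ r, ψ (r, p.1, p.2) * conj (ψ (r, q.1, q.2))))) :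
    Real.logb 2 K - Real.logb 2 L ≥
      Real.logb 2
        (maxEig (Matrix.of fun b b' : Bt => ∑ r, ∑ a, ψ (r, a, b) * conj (ψ (r, a, b'))) * D) :=
  stmt0_general ψ hunit D hmix K L hK hmaj
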